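/- Let X be a regular space with no uncountable free sequences, 𝒰_X a maximal non-fixed filter of closed subsets of X, and Y ⊆ X a set that diagonalizes 𝒰_X with {B(X,α,n) : n ∈ ω} a decreasing neighborhood base at each point α of Y ≅ ω₁. Then for every promise f (a function with uncountable domain ⊆ ω₁ and range ⊆ ω), the set Ban(f) = {x ∈ X : {α ∈ dom f : x ∈ B(X,α,f(α))} is countable} is not 𝒰_X-large. -/

import Mathlib

open Set

/-- The ordinals below `ω₁`. -/
abbrev Omega1 : Type 1 := {o : Ordinal.{0} // o < (Cardinal.aleph 1).ord}

/-- `X` has an uncountable free sequence. -/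
def HasUncountableFreeSeq (X : Type*) [TopologicalSpace X] : Prop :=
  ∃ x : Omega1 → X, ∀ β : Omega1,
    closure (x '' {α | α < β}) ∩ closure (x '' {α | β ≤ α}) = ∅

lemma omega1_Iio_countable (η : Omega1) : {γ : Omega1 | γ < η}.Countable := by
  rw [Cardinal.countable_iff_lt_aleph_one]
  have h1 : Cardinal.mk {γ : Omega1 | γ < η} ≤ Cardinal.mk (Set.Iio η.1) :=
    Cardinal.mk_le_of_injective (f := fun γ => ⟨γ.1.1, mem_Iio.mpr (Subtype.coe_lt_coe.mpr γ.2)⟩)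
      (by intro a b hab
          have := congrArg Subtype.val hab
          exact Subtype.ext (Subtype.ext this))
  rw [Ordinal.mk_Iio_ordinal] at h1
  exact h1.trans_lt (Cardinal.lift_lt_aleph_one.mpr (Cardinal.lt_ord.mp η.2))

lemma omega1_Iic_countable (η : Omega1) : (Set.Iic η).Countable := by
  have := (omega1_Iio_countable η).insert η
  refine this.mono fun γ hγ => ?_
  rcases eq_or_lt_of_le (mem_Iic.mp hγ) with h | h
  · exact Or.inl h
  · exact Or.inr h

lemma omega1_wf : WellFounded ((· < ·) : Omega1 → Omega1 → Prop) := wellFounded_lt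

/-- Transfinite recursion picking points in `P` avoiding closures of initial segments. -/
lemma omega1_rec_exists {X : Type*} (P : Set X) (G : Set X → Set X)
    (h : ∀ (η : Omega1) (ih : ∀ γ : Omega1, γ < η → X),
      (P ∩ ⋂ β ∈ Set.Iic η, G {z | ∃ γ : Omega1, ∃ hγ : γ < η, γ < β ∧ ih γ hγ = z}).Nonempty) :
    ∃ x : Omega1 → X, ∀ η, x η ∈ P ∧ ∀ β, β ≤ η → x η ∈ G (x '' {γ | γ < β}) := by
  refine ⟨omega1_wf.fix (fun η ih => (h η ih).choose), fun η => ?_⟩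
  have heq := WellFounded.fix_eq omega1_wf (fun η ih => (h η ih).choose) η
  have hspec := (h η (fun γ _ => omega1_wf.fix (fun η ih => (h η ih).choose) γ)).choose_spec
  constructor
  · rw [heq]; exact hspec.1
  · intro β hβ
    have h2 := mem_iInter₂.mp hspec.2 β (mem_Iic.mpr hβ)
    have hset : {z | ∃ γ : Omega1, ∃ hγ : γ < η, γ < β ∧
          omega1_wf.fix (fun η ih => (h η ih).choose) γ = z}
        = (omega1_wf.fix (fun η ih => (h η ih).choose)) '' {γ | γ < β} := by
      ext z; constructor
      · rintro ⟨γ, _, h3, rfl⟩; exact ⟨γ, h3, rfl⟩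
      · rintro ⟨γ, h3, rfl⟩; exact ⟨γ, lt_of_lt_of_le h3 hβ, h3, rfl⟩
    rw [hset] at h2
    rw [heq]; exact h2

/-- "singletons are safe": let `X` be regular with no uncountable free
sequence, `𝒰` a countably complete, non-fixed, maximal filter of closed sets, and
`Y = {ι α : α < ω₁}` a set diagonalizing `𝒰` with decreasing neighborhood bases
`B(α,·)` at its points.  Then for every promise `f`, the set `Ban(f)` is not `𝒰`-large. -/
theorem stmt13 {X : Type*} [TopologicalSpace X] [RegularSpace X]
    (𝒰 : Set (Set X))
    (hne : 𝒰.Nonempty)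
    (hcl : ∀ A ∈ 𝒰, IsClosed A ∧ A.Nonempty)
    (hinter : ∀ A ∈ 𝒰, ∀ B ∈ 𝒰, A ∩ B ∈ 𝒰)
    (hsup : ∀ A ∈ 𝒰, ∀ B : Set X, IsClosed B → A ⊆ B → B ∈ 𝒰)
    (hcc : ∀ A : ℕ → Set X, (∀ n, A n ∈ 𝒰) → (⋂ n, A n) ∈ 𝒰)
    (hmax : ∀ C : Set X, IsClosed C → (∀ A ∈ 𝒰, (C ∩ A).Nonempty) → C ∈ 𝒰)
    (hnonfixed : ⋂₀ 𝒰 = ∅)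
    (hfree : ¬ HasUncountableFreeSeq X)
    (ι : Omega1 → X) (hι : Function.Injective ι)
    (hlarge : ∀ A ∈ 𝒰, (Set.range ι ∩ A).Nonempty)
    (hdiag : ∀ A ∈ 𝒰, (Set.range ι \ A).Countable)
    (B : Omega1 → ℕ → Set X)
    (hB : ∀ α n, IsOpen (B α n) ∧ ι α ∈ B α n ∧ B α (n + 1) ⊆ B α n)
    (hbase : ∀ (α : Omega1) (U : Set X), IsOpen U → ι α ∈ U → ∃ n, B α n ⊆ U)
    (D : Set Omega1) (hD : ¬ D.Countable) (f : Omega1 → ℕ) :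
    ¬ ∀ A ∈ 𝒰,
        ({x : X | {α : Omega1 | α ∈ D ∧ x ∈ B α (f α)}.Countable} ∩ A).Nonempty := by
  intro hBan
  set Ban : Set X := {x : X | {α : Omega1 | α ∈ D ∧ x ∈ B α (f α)}.Countable} with hBanDef
  -- countable completeness for countable families
  have hccS : ∀ s : Set (Set X), s.Countable → s.Nonempty → s ⊆ 𝒰 → ⋂₀ s ∈ 𝒰 := by
    intro s hs hns hsub
    obtain ⟨g, hg⟩ := hs.exists_eq_range hns
    have h2 : ⋂₀ s = ⋂ n, g n := by rw [hg, sInter_range]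
    rw [h2]
    exact hcc g (fun n => hsub (by rw [hg]; exact mem_range_self n))
  -- Step 1: no countable subset of Ban has closure in 𝒰 (pigeonhole argument)
  have hstep2 : ∀ s : Set X, s.Countable → s ⊆ Ban → closure s ∉ 𝒰 := by
    intro s hs hsB hclo
    have hdc := hdiag _ hclo
    have hE : ¬ {α : Omega1 | α ∈ D ∧ ι α ∈ closure s}.Countable := by
      intro hcnt
      apply hD
      have hsub : D ⊆ {α : Omega1 | α ∈ D ∧ ι α ∈ closure s} ∪ (ι ⁻¹' (Set.range ι \ closure s)) := by
        intro α hα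
        by_cases h : ι α ∈ closure s
        · exact Or.inl ⟨hα, h⟩
        · exact Or.inr ⟨mem_range_self α, h⟩
      exact (hcnt.union (hdc.preimage hι)).mono hsub
    have hS : (⋃ x ∈ s, {α : Omega1 | α ∈ D ∧ x ∈ B α (f α)}).Countable :=
      hs.biUnion (fun x hx => hsB hx)
    obtain ⟨α, hα⟩ : ({α : Omega1 | α ∈ D ∧ ι α ∈ closure s} \
        (⋃ x ∈ s, {α : Omega1 | α ∈ D ∧ x ∈ B α (f α)})).Nonempty := by
      rw [nonempty_iff_ne_empty]
      intro h
      exact hE (hS.mono (diff_eq_empty.mp h))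
    obtain ⟨⟨hαD, hαcl⟩, hαS⟩ := hα
    obtain ⟨z, hzB, hzs⟩ := mem_closure_iff.mp hαcl (B α (f α)) (hB α (f α)).1 (hB α (f α)).2.1
    exact hαS (mem_biUnion hzs ⟨hαD, hzB⟩)
  -- choose F : for every countable s ⊆ Ban, a member of 𝒰 missing closure s
  have hF : ∀ s : Set X, ∃ Fs, Fs ∈ 𝒰 ∧ (s.Countable → s ⊆ Ban → closure s ∩ Fs = ∅) := by
    intro s
    by_cases h : s.Countable ∧ s ⊆ Ban
    · have hnotin := hstep2 s h.1 h.2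
      have h2 : ¬ ∀ A ∈ 𝒰, (closure s ∩ A).Nonempty :=
        fun hh => hnotin (hmax _ isClosed_closure hh)
      push_neg at h2
      obtain ⟨A, hA, hAe⟩ := h2
      exact ⟨A, hA, fun _ _ => hAe⟩
    · exact ⟨hne.choose, hne.choose_spec, fun h1 h2 => absurd ⟨h1, h2⟩ h⟩
  choose F hFU hFdisj using hF
  -- Step 2: build a free sequence by recursion
  have hstep : ∀ (η : Omega1) (ih : ∀ γ : Omega1, γ < η → X),
      (Ban ∩ ⋂ β ∈ Set.Iic η, F {z | ∃ γ : Omega1, ∃ hγ : γ < η, γ < β ∧ ih γ hγ = z}).Nonempty := by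
    intro η ih
    apply hBan
    have hIic := omega1_Iic_countable η
    have hmem := hccS ((fun β => F {z | ∃ γ : Omega1, ∃ hγ : γ < η, γ < β ∧ ih γ hγ = z}) '' Set.Iic η)
      (hIic.image _) ⟨_, mem_image_of_mem _ (mem_Iic.mpr le_rfl)⟩
      (by rintro _ ⟨β, _, rfl⟩; exact hFU _)
    rwa [sInter_image] at hmem
  obtain ⟨x, hx⟩ := omega1_rec_exists Ban F hstep
  apply hfree
  refine ⟨x, fun β => ?_⟩
  have hcnt : (x '' {γ : Omega1 | γ < β}).Countable := (omega1_Iio_countable β).image x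
  have hsubB : x '' {γ : Omega1 | γ < β} ⊆ Ban := by
    rintro _ ⟨γ, _, rfl⟩; exact (hx γ).1
  have hdisj := hFdisj _ hcnt hsubB
  have htail : x '' {α : Omega1 | β ≤ α} ⊆ F (x '' {γ : Omega1 | γ < β}) := by
    rintro _ ⟨η, hη, rfl⟩; exact (hx η).2 β hη
  have hFcl : IsClosed (F (x '' {γ : Omega1 | γ < β})) := (hcl _ (hFU _)).1
  have hclos : closure (x '' {α : Omega1 | β ≤ α}) ⊆ F (x '' {γ : Omega1 | γ < β}) :=
    closure_minimal htail hFcl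
  exact eq_empty_of_subset_empty
    ((inter_subset_inter_right _ hclos).trans hdisj.subset)
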